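/- Let X be a Hilbert space over 𝕜 (𝕜 = ℝ or ℂ) and let A, B : X → X be bounded surjective linear operators. Then there exist bounded surjective linear operators T, S : X → X with A = T ∘ B and B = S ∘ A if and only if ker A = ker B. -/

import Mathlib

/-!
By the open mapping theorem a surjective operator `B` between Banach spaces is a quotient map, so
the algebraic factorisation of `A` through `B` (available as soon as `ker B ≤ ker A`) is
automatically continuous. Surjectivity of the factor is inherited from that of `A`.
-/

open Function

theorem LinearMap.exists_eq_comp_of_ker_le {R M N P : Type*} [Ring R] [AddCommGroup M] [Module R M]
    [AddCommGroup N] [Module R N] [AddCommGroup P] [Module R P]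
    (f : M →ₗ[R] P) (g : M →ₗ[R] N) (hg : Surjective g) (h : ker g ≤ ker f) :
    ∃ t : N →ₗ[R] P, f = t ∘ₗ g :=
  ⟨(ker g).liftQ f h ∘ₗ (g.quotKerEquivOfSurjective hg).symm.toLinearMap, by ext; simp⟩

theorem ContinuousLinearMap.exists_eq_comp_of_ker_le {𝕜 E F G : Type*} [NontriviallyNormedField 𝕜]
    [NormedAddCommGroup E] [NormedSpace 𝕜 E] [CompleteSpace E]
    [NormedAddCommGroup F] [NormedSpace 𝕜 F] [CompleteSpace F]
    [AddCommGroup G] [Module 𝕜 G] [TopologicalSpace G]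
    (A : E →L[𝕜] G) (B : E →L[𝕜] F) (hB : Surjective B)
    (h : LinearMap.ker (B : E →ₗ[𝕜] F) ≤ LinearMap.ker (A : E →ₗ[𝕜] G)) :
    ∃ T : F →L[𝕜] G, A = T.comp B := by
  obtain ⟨t, ht⟩ := LinearMap.exists_eq_comp_of_ker_le (A : E →ₗ[𝕜] G) (B : E →ₗ[𝕜] F) hB h
  have hAt : ⇑A = t ∘ B := congrArg DFunLike.coe ht
  refine ⟨⟨t, (B.isQuotientMap hB).continuous_iff.mpr (hAt ▸ A.continuous)⟩, ?_⟩
  ext x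
  exact congrFun hAt x

theorem ContinuousLinearMap.ker_le_ker_of_eq_comp {𝕜 E F G : Type*} [Semiring 𝕜]
    [AddCommMonoid E] [Module 𝕜 E] [TopologicalSpace E]
    [AddCommMonoid F] [Module 𝕜 F] [TopologicalSpace F]
    [AddCommMonoid G] [Module 𝕜 G] [TopologicalSpace G]
    {A : E →L[𝕜] G} {B : E →L[𝕜] F} {T : F →L[𝕜] G} (h : A = T.comp B) :
    LinearMap.ker (B : E →ₗ[𝕜] F) ≤ LinearMap.ker (A : E →ₗ[𝕜] G) := by
  subst h
  exact LinearMap.ker_le_ker_comp (B : E →ₗ[𝕜] F) (T : F →ₗ[𝕜] G)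

theorem stmt7 (𝕜 X : Type*) [RCLike 𝕜] [NormedAddCommGroup X]
    [InnerProductSpace 𝕜 X] [CompleteSpace X]
    (A B : X →L[𝕜] X) (hA : Function.Surjective A) (hB : Function.Surjective B) :
    (∃ T S : X →L[𝕜] X, Function.Surjective T ∧ Function.Surjective S ∧
        A = T.comp B ∧ B = S.comp A) ↔
      LinearMap.ker (A : X →ₗ[𝕜] X) = LinearMap.ker (B : X →ₗ[𝕜] X) := by
  constructor
  · rintro ⟨T, S, -, -, hTB, hSA⟩
    exact le_antisymm (ContinuousLinearMap.ker_le_ker_of_eq_comp hSA)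
      (ContinuousLinearMap.ker_le_ker_of_eq_comp hTB)
  · intro hker
    obtain ⟨T, hT⟩ := A.exists_eq_comp_of_ker_le B hB hker.ge
    obtain ⟨S, hS⟩ := B.exists_eq_comp_of_ker_le A hA hker.le
    refine ⟨T, S, ?_, ?_, hT, hS⟩
    · exact Surjective.of_comp (hT ▸ hA : Surjective (T.comp B))
    · exact Surjective.of_comp (hS ▸ hB : Surjective (S.comp A))
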